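/- arXiv:1702.05245 — 2 statements merged into one kernel-verified Lean document; each statement's English description precedes it below -/
import Mathlib

section
/- For any coupling constant $w > 0$ and any integer $q > 1$, the $q$-step transfer matrix $\Phi(x) = A(1, w; x) \cdot A(1,0;x)^{q-1}$ (where $A(a,b;z)$ is the $2\times 2$ transfer matrix with first row $((z-b)/a, -1/a)$ and second row $(a, 0)$) is never equal to $I$ or $-I$ for any $x \in \mathbb{R}$. Equivalently, the $q$-periodic discrete Schrödinger operator with potential $w\cdot V_n$, where $V_n = 1$ if $q \mid n$ and $V_n = 0$ otherwise, has all $q-1$ gaps open. -/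
open Matrix

/-- One-step transfer matrix `A(a,b;x)` (real energy). -/
noncomputable def transferA (a b x : ℝ) : Matrix (Fin 2) (Fin 2) ℝ :=
  !![(x - b) / a, -1 / a; a, 0]

/-- Chebyshev-like sequence: `cheb x 0 = 0`, `cheb x 1 = 1`,
`cheb x (n+2) = x * cheb x (n+1) - cheb x n`. -/
noncomputable def cheb (x : ℝ) : ℕ → ℝ
  | 0 => 0
  | 1 => 1
  | (n+2) => x * cheb x (n+1) - cheb x n

lemma cheb_pow (x : ℝ) (n : ℕ) :
    (transferA 1 0 x) ^ (n+1) =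
      !![cheb x (n+2), -(cheb x (n+1)); cheb x (n+1), -(cheb x n)] := by
  induction n with
  | zero =>
      ext i j
      fin_cases i <;> fin_cases j <;> simp [transferA, cheb, pow_one] <;> ring
  | succ n ih =>
      rw [pow_succ, ih]
      ext i j
      fin_cases i <;> fin_cases j <;>
        simp [transferA, cheb, Matrix.mul_apply, Fin.sum_univ_two] <;> ring

lemma key (w x : ℝ) (hw : 0 < w) (m : ℕ) (ε : ℝ) (hε : ε ≠ 0)
    (h : transferA 1 w x * (transferA 1 0 x) ^ (m+1)
        = ε • (1 : Matrix (Fin 2) (Fin 2) ℝ)) : False := by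
  rw [cheb_pow] at h
  have h10 := congrFun (congrFun h 1) 0
  have h11 := congrFun (congrFun h 1) 1
  have h01 := congrFun (congrFun h 0) 1
  simp [transferA, Matrix.mul_apply, Fin.sum_univ_two, Matrix.one_apply] at h10 h11 h01
  -- h10 : cheb x (m+2) = 0, h11 : -cheb x (m+1) = ε, h01 : relation
  have hrec : cheb x (m+2) = x * cheb x (m+1) - cheb x m := rfl
  have hm1 : cheb x (m+1) = -ε := by linarith
  have hm : cheb x m = x * cheb x (m+1) := by
    rw [hrec] at h10; linarith
  -- h01 : (x - w) * (-(cheb x (m+1))) + cheb x m = 0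
  have : w * cheb x (m+1) = 0 := by nlinarith [h01]
  have : cheb x (m+1) = 0 := by
    rcases mul_eq_zero.mp this with h' | h'
    · exact absurd h' (ne_of_gt hw)
    · exact h'
  rw [hm1] at this
  exact hε (by linarith)

/-- For any coupling `w > 0` and `q > 1`, the `q`-step transfer matrix
`A(1,w;x) * A(1,0;x)^(q-1)` is never `±I`: all gaps of the periodic
Schrödinger operator with potential `w·V` are open. -/
theorem all_gaps_open (w : ℝ) (hw : 0 < w) (q : ℕ) (hq : 1 < q) (x : ℝ) :
    transferA 1 w x * (transferA 1 0 x) ^ (q - 1) ≠ (1 : Matrix (Fin 2) (Fin 2) ℝ) ∧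
    transferA 1 w x * (transferA 1 0 x) ^ (q - 1) ≠ (-1 : Matrix (Fin 2) (Fin 2) ℝ) := by
  obtain ⟨m, rfl⟩ : ∃ m, q = m + 2 := ⟨q - 2, by omega⟩
  have hq1 : m + 2 - 1 = m + 1 := by omega
  rw [hq1]
  constructor
  · intro h
    exact key w x hw m 1 one_ne_zero (by simpa using h)
  · intro h
    refine key w x hw m (-1) (by norm_num) ?_
    rw [h, neg_smul, one_smul]
end

section
/- Let $b_n = \lambda\cos(n^\gamma)$ for fixed $\lambda > 0$ and $\gamma \in (0, 1/2)$. Then $\sum_{n=1}^\infty |b_{n+1} - b_n|^2 < \infty$, $\limsup_{n\to\infty} b_n = \lambda$, and $\liminf_{n\to\infty} b_n = -\lambda$. -/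
open Filter Real Topology

/-!
By Bernoulli's inequality the increments of `n ^ γ` are at most `γ n ^ (γ - 1)`, and `cos` is
1-Lipschitz, so `|b (n + 1) - b n| ^ 2 ≤ λ² γ² n ^ (2γ - 2)`, which is summable since `γ < 1/2`.
Since `n ^ γ → ∞` with increments tending to `0`, it cannot jump over any point of `x + 2πℤ`
once its steps are shorter than `ε`, so it comes `ε`-close to `x` modulo `2π` infinitely often;
taking `x = 0` and `x = π` gives the limsup and liminf.
-/

lemma rpow_add_one_sub_rpow_le {x γ : ℝ} (hx : 0 < x) (hγ0 : 0 ≤ γ) (hγ1 : γ ≤ 1) :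
    (x + 1) ^ γ - x ^ γ ≤ γ * x ^ (γ - 1) := by
  have hbern : (1 + x⁻¹) ^ γ ≤ 1 + γ * x⁻¹ :=
    rpow_one_add_le_one_add_mul_self (by linarith [inv_pos.2 hx]) hγ0 hγ1
  calc (x + 1) ^ γ - x ^ γ = x ^ γ * (1 + x⁻¹) ^ γ - x ^ γ := by
        rw [← mul_rpow hx.le (by positivity), mul_add, mul_inv_cancel₀ hx.ne', mul_one]
    _ ≤ x ^ γ * (1 + γ * x⁻¹) - x ^ γ := by gcongr
    _ = γ * x ^ (γ - 1) := by rw [rpow_sub_one hx.ne']; ring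

lemma tendsto_natCast_add_one_rpow_sub_rpow {γ : ℝ} (hγ0 : 0 ≤ γ) (hγ1 : γ < 1) :
    Tendsto (fun n : ℕ => ((n : ℝ) + 1) ^ γ - (n : ℝ) ^ γ) atTop (𝓝 0) := by
  have hdecay : Tendsto (fun n : ℕ => γ * (n : ℝ) ^ (γ - 1)) atTop (𝓝 0) := by
    have := (tendsto_rpow_neg_atTop (by linarith : 0 < 1 - γ)).comp tendsto_natCast_atTop_atTop
    simpa [Function.comp_def] using this.const_mul γ
  refine squeeze_zero' (.of_forall fun n => ?_) ?_ hdecay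
  · exact sub_nonneg.2 (rpow_le_rpow n.cast_nonneg (by linarith) hγ0)
  · filter_upwards [eventually_gt_atTop 0] with n hn
    exact rpow_add_one_sub_rpow_le (by exact_mod_cast hn) hγ0 hγ1.le

lemma summable_sq_natCast_add_one_rpow_sub_rpow {γ : ℝ} (hγ0 : 0 ≤ γ) (hγ : γ < 1 / 2) :
    Summable (fun n : ℕ => (((n : ℝ) + 1) ^ γ - (n : ℝ) ^ γ) ^ 2) := by
  refine ((summable_nat_rpow.2 (by linarith : (γ - 1) * 2 < -1)).mul_left (γ ^ 2))
    |>.of_norm_bounded_eventually_nat ?_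
  filter_upwards [eventually_gt_atTop 0] with n hn_pos
  have hn : (0 : ℝ) < n := by exact_mod_cast hn_pos
  have hstep_nonneg : 0 ≤ ((n : ℝ) + 1) ^ γ - (n : ℝ) ^ γ :=
    sub_nonneg.2 (rpow_le_rpow hn.le (by linarith) hγ0)
  rw [norm_pow, norm_of_nonneg hstep_nonneg, rpow_mul hn.le, rpow_two, ← mul_pow]
  exact pow_le_pow_left₀ hstep_nonneg (rpow_add_one_sub_rpow_le hn hγ0 (by linarith)) 2

lemma exists_ge_abs_sub_lt_of_forall_sub_lt {u : ℕ → ℝ} {ε y : ℝ} {M : ℕ}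
    (hstep : ∀ n ≥ M, u (n + 1) - u n < ε) (hM : u M < y) (hy : ∃ n ≥ M, y ≤ u n) :
    ∃ n ≥ M, |u n - y| < ε := by
  obtain ⟨N, hNM, hN⟩ := hy
  induction N, hNM using Nat.le_induction with
  | base => exact absurd hN hM.not_ge
  | succ n hnM ih =>
    by_cases hn : y ≤ u n
    · exact ih hn
    · refine ⟨n + 1, by omega, abs_lt.2 ⟨?_, ?_⟩⟩ <;> linarith [hstep n hnM]

lemma frequently_abs_sub_add_int_mul_lt {u : ℕ → ℝ} (hu : Tendsto u atTop atTop)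
    (hstep : Tendsto (fun n => u (n + 1) - u n) atTop (𝓝 0)) (x : ℝ) {p ε : ℝ} (hp : 0 < p)
    (hε : 0 < ε) : ∃ᶠ n in atTop, ∃ k : ℤ, |u n - (x + k * p)| < ε := by
  refine frequently_atTop.2 fun N => ?_
  obtain ⟨M, hM⟩ := eventually_atTop.1
    ((hstep.eventually (gt_mem_nhds hε)).and (eventually_ge_atTop N))
  obtain ⟨k, hk⟩ := exists_int_gt ((u M - x) / p)
  have hMk : u M < x + k * p := by linarith [(div_lt_iff₀ hp).1 hk]
  obtain ⟨n, hnM, hn⟩ := exists_ge_abs_sub_lt_of_forall_sub_lt (fun n hn => (hM n hn).1) hMk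
    (((hu.eventually_ge_atTop _).and (eventually_ge_atTop M)).exists.imp fun _ h => ⟨h.2, h.1⟩)
  exact ⟨n, (hM M le_rfl).2.trans hnM, k, hn⟩

lemma Function.Periodic.frequently_abs_comp_sub_lt {g : ℝ → ℝ} {p : ℝ} (hg : Function.Periodic g p)
    (hp : 0 < p) {u : ℕ → ℝ} (hu : Tendsto u atTop atTop)
    (hstep : Tendsto (fun n => u (n + 1) - u n) atTop (𝓝 0)) {x : ℝ} (hgx : ContinuousAt g x)
    {ε : ℝ} (hε : 0 < ε) : ∃ᶠ n in atTop, |g (u n) - g x| < ε := by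
  obtain ⟨δ, hδ, hgδ⟩ := Metric.continuousAt_iff.1 hgx ε hε
  refine (frequently_abs_sub_add_int_mul_lt hu hstep x hp hδ).mono fun n ⟨k, hk⟩ => ?_
  rw [← hg.sub_int_mul_eq k]
  exact hgδ (by rw [dist_eq]; convert hk using 2; ring)

lemma limsup_eq_of_eventually_le_of_frequently_lt {α : Type*} {f : Filter α} {u : α → ℝ} {c : ℝ}
    (hle : ∀ᶠ x in f, u x ≤ c) (hfreq : ∀ ε > 0, ∃ᶠ x in f, c - ε < u x) :
    limsup u f = c := by
  refine le_antisymm (limsup_le_of_le ?_ hle) (le_of_forall_sub_le fun ε hε => ?_)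
  · exact .of_frequently_ge ((hfreq 1 one_pos).mono fun _ h => h.le)
  · exact le_limsup_of_frequently_le ((hfreq ε hε).mono fun _ h => h.le)
      (isBoundedUnder_of_eventually_le hle)

lemma liminf_eq_of_eventually_ge_of_frequently_lt {α : Type*} {f : Filter α} {u : α → ℝ} {c : ℝ}
    (hge : ∀ᶠ x in f, c ≤ u x) (hfreq : ∀ ε > 0, ∃ᶠ x in f, u x < c + ε) :
    liminf u f = c := by
  refine le_antisymm (le_of_forall_pos_le_add fun ε hε => ?_) (le_liminf_of_le ?_ hge)
  · exact liminf_le_of_frequently_le ((hfreq ε hε).mono fun _ h => h.le)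
      (isBoundedUnder_of_eventually_ge hge)
  · exact .of_frequently_le ((hfreq 1 one_pos).mono fun _ h => h.le)

/-- For `b_n = λ cos(n^γ)` with `γ ∈ (0,1/2)`: square-summable variation,
`limsup b_n = λ` and `liminf b_n = -λ`. -/
theorem slowly_oscillating_example (lam γ : ℝ) (hlam : 0 < lam)
    (hγ : γ ∈ Set.Ioo (0 : ℝ) (1 / 2)) (b : ℕ → ℝ)
    (hb : ∀ n : ℕ, b n = lam * Real.cos ((n : ℝ) ^ γ)) :
    Summable (fun n => |b (n + 1) - b n| ^ 2) ∧
    limsup b atTop = lam ∧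
    liminf b atTop = -lam := by
  obtain ⟨hγ0, hγ_half⟩ := hγ
  set u : ℕ → ℝ := fun n => (n : ℝ) ^ γ
  have hu : Tendsto u atTop atTop := (tendsto_rpow_atTop hγ0).comp tendsto_natCast_atTop_atTop
  have hstep : Tendsto (fun n => u (n + 1) - u n) atTop (𝓝 0) := by
    simpa [u] using tendsto_natCast_add_one_rpow_sub_rpow hγ0.le (by linarith)
  have hfreq : ∀ x, ∀ ε > 0, ∃ᶠ n in atTop, |lam * cos (u n) - lam * cos x| < ε :=
    fun x ε hε => (cos_periodic.comp (lam * ·)).frequently_abs_comp_sub_lt two_pi_pos hu hstep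
      (by fun_prop) hε
  refine ⟨?_, ?_, ?_⟩
  · refine .of_nonneg_of_le (fun _ => by positivity) (fun n => ?_)
      ((summable_sq_natCast_add_one_rpow_sub_rpow hγ0.le hγ_half).mul_left (lam ^ 2))
    rw [hb, hb, ← mul_sub, abs_mul, mul_pow, sq_abs lam, Nat.cast_succ]
    exact mul_le_mul_of_nonneg_left
      (sq_le_sq.2 ((abs_abs _).trans_le (abs_cos_sub_cos_le _ _))) (sq_nonneg lam)
  · refine limsup_eq_of_eventually_le_of_frequently_lt (.of_forall fun n => ?_) fun ε hε => ?_
    · rw [hb]; nlinarith [cos_le_one ((n : ℝ) ^ γ)]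
    · refine (hfreq 0 ε hε).mono fun n h => ?_
      rw [cos_zero, mul_one] at h
      rw [hb]; linarith [abs_lt.1 h]
  · refine liminf_eq_of_eventually_ge_of_frequently_lt (.of_forall fun n => ?_) fun ε hε => ?_
    · rw [hb]; nlinarith [neg_one_le_cos ((n : ℝ) ^ γ)]
    · refine (hfreq π ε hε).mono fun n h => ?_
      rw [cos_pi, mul_neg_one] at h
      rw [hb]; linarith [abs_lt.1 h]
end
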